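/- For a direct sum of quadratic spaces, the Clifford algebra of the sum is isomorphic (as a ℤ/2-graded algebra) to the graded tensor product of the Clifford algebras of the summands: Cl(hF ⊕ vF, g ⊕ h) ≅ Cl(hF, g) ⊗̂ Cl(vF, h). -/
import Mathlib


open scoped TensorProduct

/-- The Clifford algebra of an orthogonal direct sum of quadratic spaces is isomorphic,
as a ℤ/2-graded algebra, to the graded tensor product of the Clifford algebras of the
summands: `Cl(hF ⊕ vF, g ⊕ h) ≅ Cl(hF, g) ⊗̂ Cl(vF, h)`. -/
theorem clifford_prod_iso_graded_tensor
    (hF vF : Type) [AddCommGroup hF] [Module ℝ hF] [FiniteDimensional ℝ hF]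
    [AddCommGroup vF] [Module ℝ vF] [FiniteDimensional ℝ vF]
    (g : QuadraticForm ℝ hF) (h : QuadraticForm ℝ vF) :
    Nonempty (CliffordAlgebra (g.prod h) ≃ₐ[ℝ]
      (CliffordAlgebra.evenOdd g ᵍ⊗[ℝ] CliffordAlgebra.evenOdd h)) := ⟨CliffordAlgebra.prodEquiv g h⟩
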